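/- (Morley's trisector theorem) Let A, B, C be an affinely independent triple of points in the Euclidean plane ℝ², and write α = ∠BAC, β = ∠CBA, γ = ∠ACB for its (unsigned) interior angles. Let X, Y, Z be points in the interior of the convex hull of {A, B, C} such that ∠XBC = β/3 and ∠XCB = γ/3 (X is the meet of the trisectors adjacent to side BC), ∠YCA = γ/3 and ∠YAC = α/3 (Y is the meet of the trisectors adjacent to side CA), and ∠ZAB = α/3 and ∠ZBA = β/3 (Z is the meet of the trisectors adjacent to side AB). Then the triangle XYZ is equilateral, i.e. dist X Y = dist Y Z = dist Z X. -/

import Mathlib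

/-!
Scale the triangle so that its sides are `BC = K sin α`, `CA = K sin β`, `AB = K sin γ` (law of
sines). In the triangle `BXC` the angle at `X` is `2π/3 + α/3`, so the law of sines together with
`sin α = 4 sin (α/3) sin (π/3 + α/3) sin (π/3 - α/3)` gives
`BX = 4K sin (α/3) sin (π/3 + α/3) sin (γ/3)`, and symmetrically
`BZ = 4K sin (γ/3) sin (π/3 + γ/3) sin (α/3)`. As `X` and `Z` lie inside the angle at `B`, the
angle `ZBX` is `β/3`, and the law of cosines in `ZBX` becomes the law of cosines of a triangle
with angles `π/3 + γ/3`, `π/3 + α/3`, `β/3`: hence `ZX = 4K sin (α/3) sin (β/3) sin (γ/3)`,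
which is symmetric in the three angles.
-/

open EuclideanGeometry Real

namespace Real

theorem four_mul_sin_mul_sin_pi_div_three_add_mul_sin_pi_div_three_sub (x : ℝ) :
    4 * sin x * sin (π / 3 + x) * sin (π / 3 - x) = sin (3 * x) := by
  have h3 : √3 ^ 2 = 3 := sq_sqrt (by norm_num)
  rw [sin_three_mul, sin_add, sin_sub, sin_pi_div_three, cos_pi_div_three]
  linear_combination (sin x * cos x ^ 2) * h3 + (3 * sin x) * sin_sq_add_cos_sq x

theorem sin_sq_add_sin_sq_sub_two_mul_sin_mul_sin_mul_cos {x y z : ℝ} (h : x + y + z = π) :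
    sin x ^ 2 + sin y ^ 2 - 2 * sin x * sin y * cos z = sin z ^ 2 := by
  obtain rfl : z = π - (x + y) := by linarith
  rw [cos_pi_sub, sin_pi_sub, cos_add, sin_add]
  linear_combination (-sin x ^ 2) * sin_sq_add_cos_sq y + (-sin y ^ 2) * sin_sq_add_cos_sq x

end Real

theorem exists_pos_smul_add_smul_of_mem_interior_convexHull {V : Type*} [NormedAddCommGroup V]
    [NormedSpace ℝ V] {A B C X : V}
    (hABC : AffineIndependent ℝ ![A, B, C]) (hX : X ∈ interior (convexHull ℝ {A, B, C})) :
    ∃ a c : ℝ, 0 < a ∧ 0 < c ∧ X - B = a • (A - B) + c • (C - B) := by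
  have hrange : Set.range ![A, B, C] = {A, B, C} := by
    rw [Matrix.range_cons, Matrix.range_cons_cons_empty]; rfl
  -- an interior point forces `A, B, C` to span `V`, so they form an affine basis
  let b : AffineBasis (Fin 3) ℝ V :=
    ⟨![A, B, C], hABC, affineSpan_eq_top_of_nonempty_interior ⟨X, hrange ▸ hX⟩⟩
  have hpos : ∀ i, 0 < b.coord i X := by
    rw [← Set.mem_ofPred (p := fun x => ∀ i, 0 < b.coord i x), ← b.interior_convexHull]
    exact hrange ▸ hX
  have hsum := b.sum_coord_apply_eq_one X
  have hcomb := b.linear_combination_coord_eq_self X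
  simp only [Fin.sum_univ_three] at hsum hcomb
  change b.coord 0 X • A + b.coord 1 X • B + b.coord 2 X • C = X at hcomb
  refine ⟨b.coord 0 X, b.coord 2 X, hpos 0, hpos 2, ?_⟩
  linear_combination (norm := module) -hcomb + hsum • B

namespace EuclideanGeometry

variable {V P : Type*} [NormedAddCommGroup V] [InnerProductSpace ℝ V] [MetricSpace P]
  [NormedAddTorsor V P]

theorem exists_dist_eq_mul_sin_angle {A B C : P} (hABC : ¬Collinear ℝ {A, B, C}) :
    ∃ K : ℝ, dist B C = K * sin (∠ B A C) ∧ dist C A = K * sin (∠ C B A) ∧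
      dist A B = K * sin (∠ A C B) := by
  have hsin : sin (∠ B A C) ≠ 0 :=
    (sin_pos_of_not_collinear (by rwa [Set.insert_comm])).ne'
  refine ⟨dist B C / sin (∠ B A C), by field_simp, ?_, ?_⟩
  · have := law_sin B A C
    rw [dist_comm A C, dist_comm C B] at this
    field_simp
    linear_combination this
  · have := law_sin C A B
    rw [angle_comm C A B, angle_comm B C A] at this
    field_simp
    linear_combination this

theorem dist_eq_four_mul_sin_mul_sin_mul_sin {α β γ K : ℝ} {B C X : P}
    (hα : 0 < α) (hβ : 0 < β) (hγ : 0 < γ) (hsum : α + β + γ = π)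
    (hB : ∠ X B C = β / 3) (hC : ∠ X C B = γ / 3) (hBC : dist B C = K * sin α) :
    dist B X = 4 * K * sin (α / 3) * sin (π / 3 + α / 3) * sin (γ / 3) := by
  have hXB : X ≠ B := by
    rintro rfl
    rw [angle_self_left] at hB
    linarith
  have hXC : X ≠ C := by
    rintro rfl
    rw [angle_self_left] at hC
    linarith
  have hX : ∠ B X C = π - (π / 3 - α / 3) := by
    have := angle_add_angle_add_angle_eq_pi B hXC
    rw [hB, angle_comm B C X, hC, angle_comm C X B] at this
    linarith
  have hsin : 0 < sin (π / 3 - α / 3) := sin_pos_of_pos_of_lt_pi (by linarith) (by linarith)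
  have hlaw := law_sin X C B
  have hα3 := four_mul_sin_mul_sin_pi_div_three_add_mul_sin_pi_div_three_sub (α / 3)
  rw [mul_div_cancel₀ _ three_ne_zero] at hα3
  rw [hC, hX, sin_pi_sub, dist_comm C B, hBC, ← hα3] at hlaw
  apply mul_right_cancel₀ hsin.ne'
  linear_combination -hlaw

theorem dist_eq_abs_four_mul_sin_mul_sin_mul_sin {a b c K : ℝ} {B X Z : P}
    (habc : a + b + c = π / 3) (hX : dist B X = 4 * K * sin a * sin (π / 3 + a) * sin c)
    (hZ : dist B Z = 4 * K * sin c * sin (π / 3 + c) * sin a) (hB : ∠ Z B X = b) :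
    dist Z X = |4 * K * sin a * sin b * sin c| := by
  rw [← abs_of_nonneg dist_nonneg, ← sq_eq_sq_iff_abs_eq_abs, sq, law_cos, dist_comm Z B,
    dist_comm X B, hX, hZ, hB]
  have := sin_sq_add_sin_sq_sub_two_mul_sin_mul_sin_mul_cos (x := π / 3 + c) (y := π / 3 + a)
    (z := b) (by linarith)
  linear_combination (4 * K * sin a * sin c) ^ 2 * this

section Oriented

variable [Fact (Module.finrank ℝ V = 2)] [Module.Oriented ℝ V (Fin 2)]

theorem angle_eq_sub_of_oangle_sign_eq {A B C X Z : P} (hs : (∡ A B C).sign ≠ 0)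
    (hZ : (∡ A B Z).sign = (∡ A B C).sign) (hX : (∡ X B C).sign = (∡ A B C).sign)
    (h : ∠ A B Z + ∠ X B C ≤ ∠ A B C) :
    ∠ Z B X = ∠ A B C - ∠ A B Z - ∠ X B C := by
  have hne : ∀ {p r : P}, (∡ p B r).sign = (∡ A B C).sign → p ≠ B ∧ r ≠ B := by
    intro p r hpr
    constructor <;> rintro rfl <;>
      simp only [oangle_self_left, oangle_self_right, Real.Angle.sign_zero] at hpr <;>
      exact hs hpr.symm
  obtain ⟨hAB, hZB⟩ := hne hZ
  obtain ⟨hXB, hCB⟩ := hne hX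
  have hadd : ∡ Z B X = ∡ A B C - ∡ A B Z - ∡ X B C := by
    rw [← oangle_add hAB hXB hCB, ← oangle_add hAB hZB hXB]
    abel
  have hrange :
      0 ≤ ∠ A B C - ∠ A B Z - ∠ X B C ∧ ∠ A B C - ∠ A B Z - ∠ X B C ≤ π := by
    constructor <;> linarith [angle_le_pi A B C, angle_nonneg A B Z, angle_nonneg X B C]
  rw [angle_eq_abs_oangle_toReal hZB hXB, hadd]
  rcases hsign : (∡ A B C).sign with _ | _ | _
  · exact absurd hsign hs
  · rw [hsign] at hZ hX
    rw [oangle_eq_neg_angle_of_sign_eq_neg_one hsign, oangle_eq_neg_angle_of_sign_eq_neg_one hZ,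
      oangle_eq_neg_angle_of_sign_eq_neg_one hX,
      show -(∠ A B C : Real.Angle) - -(∠ A B Z : Real.Angle) - -(∠ X B C : Real.Angle) =
      -((∠ A B C - ∠ A B Z - ∠ X B C : ℝ) : Real.Angle) by
        rw [Real.Angle.coe_sub, Real.Angle.coe_sub]; abel]
    exact Real.Angle.abs_toReal_neg_coe_eq_self_iff.2 hrange
  · rw [hsign] at hZ hX
    rw [oangle_eq_angle_of_sign_eq_one hsign, oangle_eq_angle_of_sign_eq_one hZ,
      oangle_eq_angle_of_sign_eq_one hX, ← Real.Angle.coe_sub, ← Real.Angle.coe_sub]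
    exact Real.Angle.abs_toReal_coe_eq_self_iff.2 hrange

end Oriented

theorem oangle_sign_eq_of_mem_interior_convexHull [Fact (Module.finrank ℝ V = 2)]
    [Module.Oriented ℝ V (Fin 2)] {A B C X : V} (hABC : AffineIndependent ℝ ![A, B, C])
    (hX : X ∈ interior (convexHull ℝ {A, B, C})) :
    (∡ A B X).sign = (∡ A B C).sign ∧ (∡ X B C).sign = (∡ A B C).sign := by
  obtain ⟨a, c, ha, hc, hXB⟩ := exists_pos_smul_add_smul_of_mem_interior_convexHull hABC hX
  simp only [EuclideanGeometry.oangle, vsub_eq_sub, hXB]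
  rw [Orientation.oangle_sign_smul_add_smul_right, Orientation.oangle_sign_smul_add_smul_left,
    sign_pos ha, sign_pos hc]
  simp

theorem angle_eq_sub_of_mem_interior_convexHull [Fact (Module.finrank ℝ V = 2)] {A B C X Z : V}
    (hABC : AffineIndependent ℝ ![A, B, C]) (hZ : Z ∈ interior (convexHull ℝ {A, B, C}))
    (hX : X ∈ interior (convexHull ℝ {A, B, C})) (h : ∠ A B Z + ∠ X B C ≤ ∠ A B C) :
    ∠ Z B X = ∠ A B C - ∠ A B Z - ∠ X B C := by
  have : FiniteDimensional ℝ V := .of_fact_finrank_eq_two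
  let _ : Module.Oriented ℝ V (Fin 2) :=
    ⟨(Module.finBasisOfFinrankEq ℝ V Fact.out).orientation⟩
  have hs : (∡ A B C).sign ≠ 0 := by
    rw [Ne, oangle_sign_eq_zero_iff_collinear]
    exact affineIndependent_iff_not_collinear_set.1 hABC
  exact angle_eq_sub_of_oangle_sign_eq hs (oangle_sign_eq_of_mem_interior_convexHull hABC hZ).1
    (oangle_sign_eq_of_mem_interior_convexHull hABC hX).2 h

theorem dist_eq_of_trisector_angles [Fact (Module.finrank ℝ V = 2)] {A B C X Z : V}
    {K : ℝ} (hABC : ¬Collinear ℝ {A, B, C}) (hX : X ∈ interior (convexHull ℝ {A, B, C}))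
    (hZ : Z ∈ interior (convexHull ℝ {A, B, C}))
    (hXB : ∠ X B C = ∠ C B A / 3) (hXC : ∠ X C B = ∠ A C B / 3)
    (hZA : ∠ Z A B = ∠ B A C / 3) (hZB : ∠ Z B A = ∠ C B A / 3)
    (hBC : dist B C = K * sin (∠ B A C)) (hAB : dist A B = K * sin (∠ A C B)) :
    dist Z X = |4 * K * sin (∠ B A C / 3) * sin (∠ C B A / 3) * sin (∠ A C B / 3)| := by
  have hα : 0 < ∠ B A C := angle_pos_of_not_collinear (by rwa [Set.insert_comm])
  have hβ : 0 < ∠ C B A := angle_comm A B C ▸ angle_pos_of_not_collinear hABC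
  have hγ : 0 < ∠ A C B := angle_pos_of_not_collinear (by rwa [Set.pair_comm])
  have hsum : ∠ B A C + ∠ C B A + ∠ A C B = π := by
    have := angle_add_angle_add_angle_eq_pi A (ne₂₃_of_not_collinear hABC)
    linarith
  have hmid : ∠ Z B X = ∠ C B A / 3 := by
    have hZB' : ∠ A B Z = ∠ C B A / 3 := by rw [angle_comm, hZB]
    rw [angle_eq_sub_of_mem_interior_convexHull (affineIndependent_iff_not_collinear_set.2 hABC)
      hZ hX (by rw [hZB', hXB, angle_comm A B C]; linarith), hZB', hXB, angle_comm A B C]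
    ring
  exact dist_eq_abs_four_mul_sin_mul_sin_mul_sin (by linarith)
    (dist_eq_four_mul_sin_mul_sin_mul_sin hα hβ hγ hsum hXB hXC hBC)
    (dist_eq_four_mul_sin_mul_sin_mul_sin hγ hβ hα (by linarith) hZB hZA
      (by rw [dist_comm, hAB]))
    hmid

end EuclideanGeometry

theorem morley_trisector
    (A B C X Y Z : EuclideanSpace ℝ (Fin 2))
    (hABC : AffineIndependent ℝ ![A, B, C])
    (hX : X ∈ interior (convexHull ℝ {A, B, C}))
    (hY : Y ∈ interior (convexHull ℝ {A, B, C}))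
    (hZ : Z ∈ interior (convexHull ℝ {A, B, C}))
    (hXB : ∠ X B C = ∠ C B A / 3) (hXC : ∠ X C B = ∠ A C B / 3)
    (hYC : ∠ Y C A = ∠ A C B / 3) (hYA : ∠ Y A C = ∠ B A C / 3)
    (hZA : ∠ Z A B = ∠ B A C / 3) (hZB : ∠ Z B A = ∠ C B A / 3) :
    dist X Y = dist Y Z ∧ dist Y Z = dist Z X := by
  have : Fact (Module.finrank ℝ (EuclideanSpace ℝ (Fin 2)) = 2) :=
    ⟨finrank_euclideanSpace_fin⟩
  have hBCA : ({B, C, A} : Set (EuclideanSpace ℝ (Fin 2))) = {A, B, C} := by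
    rw [Set.pair_comm, Set.insert_comm]
  have hCAB : ({C, A, B} : Set (EuclideanSpace ℝ (Fin 2))) = {A, B, C} := by
    rw [Set.insert_comm, Set.pair_comm]
  have hcol := affineIndependent_iff_not_collinear_set.1 hABC
  obtain ⟨K, hBC, hCA, hAB⟩ := exists_dist_eq_mul_sin_angle hcol
  have hZX := dist_eq_of_trisector_angles hcol hX hZ hXB hXC hZA hZB hBC hAB
  have hXY := dist_eq_of_trisector_angles (hBCA ▸ hcol) (hBCA ▸ hY) (hBCA ▸ hX)
    hYC hYA hXB hXC hCA hBC
  have hYZ := dist_eq_of_trisector_angles (hCAB ▸ hcol) (hCAB ▸ hZ) (hCAB ▸ hY)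
    hZA hZB hYC hYA hAB hCA
  constructor <;> [rw [hXY, hYZ]; rw [hYZ, hZX]] <;> ring_nf
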